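/- arXiv:1510.00640 — 3 statements merged into one kernel-verified Lean document; each statement's English description precedes it below -/
import Mathlib

section
/- Let R be a commutative ring, A a commutative (not necessarily associative) R-algebra, and Φ a finite set of eigenvalues with Seress fusion rules (i.e. 1⋆φ ⊆ {φ} and 0⋆φ ⊆ {φ} for all φ ∈ Φ). If a ∈ A is a Φ-axis, then for any x ∈ A and any z in the sum of the 1- and 0-eigenspaces of ad(a), one has a(xz) = (ax)z. -/
/-- The (left-)adjoint map of `a`, `x ↦ a * x`, as a linear endomorphism. -/
def adMap (R : Type*) (A : Type*) [CommRing R] [NonUnitalNonAssocCommRing A]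
    [Module R A] [SMulCommClass R A A] [IsScalarTower R A A] (a : A) :
    Module.End R A := LinearMap.mul R A a

/-- `a` is a `Φ`-axis for the fusion rules `star` on the eigenvalue set `Φ`:
a primitive idempotent whose adjoint map is diagonalisable with eigenvalues in `Φ`,
the eigenspaces multiplying according to the fusion rules. -/
def IsAxis (R : Type*) (A : Type*) [CommRing R] [NonUnitalNonAssocCommRing A]
    [Module R A] [SMulCommClass R A A] [IsScalarTower R A A]
    (Φ : Finset R) (star : R → R → Set R) (a : A) : Prop :=
  a * a = a ∧
  Module.End.eigenspace (adMap R A a) 1 = Submodule.span R {a} ∧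
  (⨆ μ ∈ Φ, Module.End.eigenspace (adMap R A a) μ) = ⊤ ∧
  ∀ μ ∈ Φ, ∀ ν ∈ Φ, ∀ x ∈ Module.End.eigenspace (adMap R A a) μ,
    ∀ y ∈ Module.End.eigenspace (adMap R A a) ν,
      x * y ∈ ⨆ γ ∈ star μ ν, Module.End.eigenspace (adMap R A a) γ

/-!
Write `A_μ` for the `μ`-eigenspace of `ad(a)`. If `x ∈ A_μ` and `xz ∈ A_μ`, then
`a(xz) = μ xz = (ax)z`. The Seress rules say exactly that multiplication by `z ∈ A_1` or
`z ∈ A_0` maps every `A_μ` into itself, so both sides of `a(xz) = (ax)z`, which are linear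
in `x`, agree on every eigenspace and hence on `A = ⨁ A_μ`.
-/

open Module.End

section

variable {R A : Type*} [CommRing R] [NonUnitalNonAssocCommRing A]
  [Module R A] [SMulCommClass R A A] [IsScalarTower R A A]

theorem mem_eigenspace_adMap_iff {a w : A} {μ : R} :
    w ∈ eigenspace (adMap R A a) μ ↔ a * w = μ • w := by
  simp [adMap]

theorem mul_assoc_of_mem_eigenspace_adMap {a x z : A} {μ : R}
    (hx : x ∈ eigenspace (adMap R A a) μ) (hxz : x * z ∈ eigenspace (adMap R A a) μ) :
    a * (x * z) = (a * x) * z := by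
  rw [mem_eigenspace_adMap_iff.mp hxz, mem_eigenspace_adMap_iff.mp hx, smul_mul_assoc]

theorem mul_assoc_of_mapsTo_eigenspaces {a z : A} {S : Set R}
    (hspan : ⨆ μ ∈ S, eigenspace (adMap R A a) μ = ⊤)
    (hz : ∀ μ ∈ S, ∀ x ∈ eigenspace (adMap R A a) μ, x * z ∈ eigenspace (adMap R A a) μ)
    (x : A) : a * (x * z) = (a * x) * z := by
  have hle : ⨆ μ ∈ S, eigenspace (adMap R A a) μ ≤
      LinearMap.eqLocus (adMap R A a ∘ₗ LinearMap.mulRight R z)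
        (LinearMap.mulRight R z ∘ₗ adMap R A a) :=
    iSup₂_le fun μ hμ x hx => mul_assoc_of_mem_eigenspace_adMap hx (hz μ hμ x hx)
  rw [hspan] at hle
  exact hle Submodule.mem_top

namespace IsAxis

variable {Φ : Finset R} {star : R → R → Set R} {a : A}

theorem mul_mem_eigenspace_of_star_subset (ha : IsAxis R A Φ star a) {μ ν : R}
    (hμ : μ ∈ Φ) (hν : ν ∈ Φ) (hstar : star ν μ ⊆ {μ}) {x z : A}
    (hx : x ∈ eigenspace (adMap R A a) μ) (hz : z ∈ eigenspace (adMap R A a) ν) :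
    x * z ∈ eigenspace (adMap R A a) μ := by
  have hle : ⨆ γ ∈ star ν μ, eigenspace (adMap R A a) γ ≤ eigenspace (adMap R A a) μ :=
    iSup₂_le fun γ hγ => (hstar hγ : γ = μ) ▸ le_rfl
  rw [mul_comm]
  exact hle (ha.2.2.2 ν hν μ hμ z hz x hx)

theorem mul_assoc_of_mem_eigenspace (ha : IsAxis R A Φ star a) {ν : R} (hν : ν ∈ Φ)
    (hstar : ∀ μ ∈ Φ, star ν μ ⊆ {μ}) {z : A} (hz : z ∈ eigenspace (adMap R A a) ν)
    (x : A) : a * (x * z) = (a * x) * z :=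
  mul_assoc_of_mapsTo_eigenspaces (S := Φ) (by simpa only [Finset.mem_coe] using ha.2.2.1)
    (fun μ hμ _ hx => ha.mul_mem_eigenspace_of_star_subset hμ hν (hstar μ hμ) hx hz) x

end IsAxis

end

/-- If the fusion rules are Seress (`1⋆φ ⊆ {φ} ⊇ 0⋆φ` for all `φ ∈ Φ`) and `a` is a
`Φ`-axis, then `a(xz) = (ax)z` for all `x ∈ A` and `z` in the sum of the `1`- and
`0`-eigenspaces of `ad(a)`. -/
theorem seress_associativity
    (R : Type*) (A : Type*) [CommRing R] [NonUnitalNonAssocCommRing A]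
    [Module R A] [SMulCommClass R A A] [IsScalarTower R A A]
    (Φ : Finset R) (star : R → R → Set R)
    (h1 : (1 : R) ∈ Φ) (h0 : (0 : R) ∈ Φ)
    (hSeress : ∀ φ ∈ Φ, star 1 φ ⊆ {φ} ∧ star 0 φ ⊆ {φ})
    (a : A) (ha : IsAxis R A Φ star a) :
    ∀ x z : A,
      z ∈ Module.End.eigenspace (adMap R A a) 1 ⊔ Module.End.eigenspace (adMap R A a) 0 →
      a * (x * z) = (a * x) * z := by
  intro x z hz
  obtain ⟨z₁, hz₁, z₀, hz₀, rfl⟩ := Submodule.mem_sup.mp hz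
  rw [mul_add, mul_add, mul_add,
    ha.mul_assoc_of_mem_eigenspace h1 (fun φ hφ => (hSeress φ hφ).1) hz₁ x,
    ha.mul_assoc_of_mem_eigenspace h0 (fun φ hφ => (hSeress φ hφ).2) hz₀ x]
end

section
/- Let a be a Φ(α,β)-axis in a commutative algebra A over a ring containing 1/2, and let x ∈ A. Then a(a ∘ x) = (α−β)(a ∘ x) + (λ^a(x)(1−α) + β(α−β−1))a + (α−β)β x_+, where x ∘ y = xy − β(x+y) and x_+ is the projection of x onto the sum of the 1-, 0-, and α-eigenspaces of ad(a). -/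
section Decomposition

variable {R A : Type*} [CommRing R] [NonUnitalNonAssocCommRing A] [Module R A]
  [SMulCommClass R A A]

theorem mul_eigen_decomposition {α β lam : R} {a x₀ xα xβ : A} (ha : a * a = a)
    (h0 : a * x₀ = 0) (hα : a * xα = α • xα) (hβ : a * xβ = β • xβ) :
    a * (lam • a + x₀ + xα + xβ) = lam • a + α • xα + β • xβ := by
  simp only [mul_add, mul_smul_comm, ha, h0, hα, hβ, add_zero]

theorem mul_mul_eigen_decomposition {α β lam : R} {a x₀ xα xβ : A} (ha : a * a = a)
    (h0 : a * x₀ = 0) (hα : a * xα = α • xα) (hβ : a * xβ = β • xβ) :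
    a * (a * (lam • a + x₀ + xα + xβ)) = lam • a + (α * α) • xα + (β * β) • xβ := by
  rw [mul_eigen_decomposition ha h0 hα hβ]
  simp only [mul_add, mul_smul_comm, ha, hα, hβ, smul_smul]

end Decomposition

theorem a_mul_a_circ_x_general
    (R : Type*) (A : Type*) [CommRing R] [NonUnitalNonAssocCommRing A]
    [Module R A] [SMulCommClass R A A]
    (α β : R) (a : A) (ha : a * a = a)
    (x x₀ xα xβ : A) (lam : R)
    (hx : x = lam • a + x₀ + xα + xβ)
    (h0 : a * x₀ = 0) (hα : a * xα = α • xα) (hβ : a * xβ = β • xβ) :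
    a * (a * x - β • (a + x)) =
      (α - β) • (a * x - β • (a + x)) + (lam * (1 - α) + β * (α - β - 1)) • a +
        ((α - β) * β) • (lam • a + x₀ + xα) := by
  subst hx
  rw [mul_sub, mul_smul_comm, mul_add a a, ha, mul_mul_eigen_decomposition ha h0 hα hβ,
    mul_eigen_decomposition ha h0 hα hβ]
  module

/-- For a `Φ(α,β)`-axis `a`, with `x ∘ y = xy - β(x+y)` and `x₊` the projection of `x`
onto the sum of the `1`-, `0`- and `α`-eigenspaces of `ad(a)`, one has
`a(a ∘ x) = (α-β)(a ∘ x) + (λ^a(x)(1-α) + β(α-β-1))a + (α-β)β·x₊`. -/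
theorem a_mul_a_circ_x
    (R : Type*) (A : Type*) [CommRing R] [NonUnitalNonAssocCommRing A]
    [Module R A] [SMulCommClass R A A] [IsScalarTower R A A]
    [Invertible (2 : R)]
    (α β : R) (a : A) (ha : a * a = a)
    (x x₀ xα xβ : A) (lam : R)
    (hx : x = lam • a + x₀ + xα + xβ)
    (h0 : a * x₀ = 0) (hα : a * xα = α • xα) (hβ : a * xβ = β • xβ) :
    a * (a * x - β • (a + x)) =
      (α - β) • (a * x - β • (a + x)) + (lam * (1 - α) + β * (α - β - 1)) • a +
        ((α - β) * β) • (lam • a + x₀ + xα) :=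
  a_mul_a_circ_x_general R A α β a ha x x₀ xα xβ lam hx h0 hα hβ
end

section
/- The symmetric bilinear form on the 6-dimensional algebra 5A_α defined by (a_i, a_i) = 1, (a_i, a_j) = (3/32)(5α−1) for i ≠ j, (a_i, s) = λ(1−β) − β with λ = 3(5α−1)/32 and β = (5α−1)/8, extended compatibly to s, has Gram matrix with determinant −(5^6 / 2^36)(3α−7)^5 (3α+1)^2 (5α−1), and is positive definite exactly when 1/5 < α < 7/3. -/
noncomputable section

/-- Index type for the basis `a₋₂, a₋₁, a₀, a₁, a₂` (as `some i`, `i : ZMod 5`) and `s`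
(as `none`) of the algebra `5A_α`. -/
abbrev I5 : Type := Option (ZMod 5)

/-- Basis vectors. -/
def e5 (F : Type*) [Field F] (k : I5) : I5 → F := Pi.single k 1

open scoped Classical in
/-- Structure constants of `5A_α`:  `T5 α i j` is the product of the `i`-th and `j`-th
basis vectors.  Here `β = (5α-1)/8`, `s = a₀∘a₁`, and indices are mod 5. -/
def T5 (F : Type*) [Field F] (α : F) : I5 → I5 → (I5 → F) :=
  fun i j =>
    match i, j with
    | some i, some j =>
        if i = j then e5 F (some i)
        else if j - i = 1 ∨ j - i = 4 then
          ((5 * α - 1) / 8) • (e5 F (some i) + e5 F (some j)) + e5 F none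
        else
          ((5 * α - 1) / 16) •
            (2 • (e5 F (some i) + e5 F (some j)) - ∑ k : ZMod 5, e5 F (some k))
            - e5 F none
    | some i, none =>
        ((1 - 5 * α) * (1 + 3 * α) / 64) • e5 F (some i)
          - ((1 + 3 * α) * (1 - 5 * α) / 128) • (e5 F (some (i - 1)) + e5 F (some (i + 1)))
          + ((1 + 3 * α) / 8) • e5 F none
    | none, some j =>
        ((1 - 5 * α) * (1 + 3 * α) / 64) • e5 F (some j)
          - ((1 + 3 * α) * (1 - 5 * α) / 128) • (e5 F (some (j - 1)) + e5 F (some (j + 1)))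
          + ((1 + 3 * α) / 8) • e5 F none
    | none, none =>
        ((7 * α - 3) * (1 + 3 * α) * (1 - 5 * α) / 2048) • (∑ k : ZMod 5, e5 F (some k))
          + (5 * (1 - 5 * α) * (1 + 3 * α) / 128) • e5 F none

/-- The bilinear multiplication of `5A_α`. -/
def mul5 (F : Type*) [Field F] (α : F) :
    (I5 → F) →ₗ[F] (I5 → F) →ₗ[F] (I5 → F) :=
  LinearMap.mk₂ F (fun x y => ∑ i : I5, ∑ j : I5, (x i * y j) • T5 F α i j)
    (fun x x' y => by simp [add_mul, add_smul, Finset.sum_add_distrib])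
    (fun c x y => by simp [Finset.smul_sum, smul_smul, mul_assoc])
    (fun x y y' => by simp [mul_add, add_smul, Finset.sum_add_distrib])
    (fun c x y => by simp [Finset.smul_sum, smul_smul, mul_left_comm])

/-!
With `λ = 3(5α-1)/32`, the Gram matrix is bordered: `1` on the diagonal of the `a`-block, `λ` off
it, the constant border `(aᵢ, s)`, and the corner `(s, s)`, which associativity of the form
determines through `(a₀a₁, s) = (a₀, a₁s)` with `a₀a₁ = β(a₀ + a₁) + s`.
For such a matrix with block size `n`, `n` times the quadratic form is `(1 - λ)` times the
Cauchy–Schwarz defect `n ∑ xᵢ² - (∑ xᵢ)²` plus a binary quadratic form in `(∑ xᵢ, xₛ)`. Hence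
positive definiteness amounts to `1 - λ > 0` together with positivity of that binary form, and for
`n = 5` the determinant is `(1 - λ)⁴ ((1 + 4λ)(s, s) - 5 (aᵢ, s)²)`. Both come down to the signs
of `7 - 3α`, `3α + 1` and `5α - 1`.
-/

open Matrix

theorem binary_quadratic_pos_iff {R : Type*} [CommRing R] [LinearOrder R] [IsStrictOrderedRing R]
    (A D E : R) :
    (∀ u v : R, u ≠ 0 ∨ v ≠ 0 → 0 < A * u ^ 2 + 2 * D * u * v + E * v ^ 2) ↔
      0 < A ∧ 0 < A * E - D ^ 2 := by
  constructor
  · intro h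
    have hA : 0 < A := by simpa using h 1 0 (by simp)
    refine ⟨hA, pos_of_mul_pos_right ?_ hA.le⟩
    linear_combination h (-D) A (Or.inr hA.ne')
  · rintro ⟨hA, hdisc⟩ u v huv
    refine pos_of_mul_pos_right ?_ hA.le
    have hsq : A * (A * u ^ 2 + 2 * D * u * v + E * v ^ 2)
        = (A * u + D * v) ^ 2 + (A * E - D ^ 2) * v ^ 2 := by ring
    rw [hsq]
    rcases eq_or_ne v 0 with rfl | hv
    · have hu : u ≠ 0 := by simpa using huv
      simpa using (by positivity : 0 < (A * u) ^ 2)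
    · exact add_pos_of_nonneg_of_pos (sq_nonneg _) (by positivity)

section Bordered

variable {R ι : Type*} [DecidableEq ι]

def borderedGram [One R] (c d e : R) : Matrix (Option ι) (Option ι) R
  | some i, some j => if i = j then 1 else c
  | some _, none => d
  | none, some _ => d
  | none, none => e

section One

variable [One R] (c d e : R)

@[simp] theorem borderedGram_some_some (i j : ι) :
    borderedGram c d e (some i) (some j) = if i = j then 1 else c := rfl

@[simp] theorem borderedGram_some_none (i : ι) : borderedGram c d e (some i) none = d := rfl

@[simp] theorem borderedGram_none_some (j : ι) : borderedGram c d e none (some j) = d := rfl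

@[simp] theorem borderedGram_none_none : borderedGram c d e none (none : Option ι) = e := rfl

theorem reindex_borderedGram {κ : Type*} [DecidableEq κ] (σ : ι ≃ κ) :
    reindex σ.optionCongr σ.optionCongr (borderedGram c d e) = borderedGram c d e := by
  ext (_ | i) (_ | j) <;> simp [← Equiv.optionCongr_symm]

end One

variable [CommRing R]

theorem det_borderedGram_fin_five (c d e : R) :
    (borderedGram c d e : Matrix (Option (Fin 5)) (Option (Fin 5)) R).det
      = (1 - c) ^ 4 * ((1 + 4 * c) * e - 5 * d ^ 2) := by
  have hM : reindex (finSuccEquiv 5).symm (finSuccEquiv 5).symm (borderedGram c d e) =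
      !![e, d, d, d, d, d; d, 1, c, c, c, c; d, c, 1, c, c, c; d, c, c, 1, c, c;
        d, c, c, c, 1, c; d, c, c, c, c, 1] := by
    ext i j; fin_cases i <;> fin_cases j <;> rfl
  rw [← det_reindex_self (finSuccEquiv 5).symm, hM]
  simp only [det_succ_row_zero, Fin.sum_univ_succ, det_unique, Fin.default_eq_zero,
    submatrix_apply, submatrix_submatrix, Function.comp_apply, Fin.zero_succAbove,
    Fin.succ_succAbove_zero, Fin.succ_succAbove_succ, Fin.val_zero, Fin.val_succ,
    cons_val', cons_val_zero, cons_val_succ, empty_val', cons_val_fin_one,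
    Finset.univ_unique, Finset.sum_singleton, of_apply, pow_zero, pow_succ]
  norm_num
  ring

variable [Fintype ι]

theorem det_borderedGram_of_card_eq_five (c d e : R) (hι : Fintype.card ι = 5) :
    (borderedGram c d e : Matrix (Option ι) (Option ι) R).det
      = (1 - c) ^ 4 * ((1 + 4 * c) * e - 5 * d ^ 2) := by
  rw [← det_reindex_self (Fintype.equivFinOfCardEq hι).optionCongr, reindex_borderedGram,
    det_borderedGram_fin_five]

theorem dotProduct_borderedGram_mulVec (c d e : R) (x : Option ι → R) :
    x ⬝ᵥ borderedGram c d e *ᵥ x =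
      (1 - c) * ∑ i, x (some i) ^ 2 + c * (∑ i, x (some i)) ^ 2
        + 2 * d * x none * ∑ i, x (some i) + e * x none ^ 2 := by
  have hrow (i : ι) : ∑ j, borderedGram c d e (some i) (some j) * x (some j)
      = (1 - c) * x (some i) + c * ∑ j, x (some j) := by
    have hentry (j : ι) :
        borderedGram c d e (some i) (some j) = (1 - c) * (if i = j then 1 else 0) + c := by
      rw [borderedGram_some_some]; split_ifs <;> ring
    simp only [hentry, add_mul, Finset.sum_add_distrib, mul_assoc, ite_mul, one_mul, zero_mul,
      Finset.sum_ite_eq, Finset.mem_univ, if_true, ← Finset.mul_sum]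
  simp only [dotProduct, mulVec, Fintype.sum_option, hrow]
  simp only [borderedGram_none_none, borderedGram_none_some, borderedGram_some_none, mul_add,
    Finset.sum_add_distrib, mul_left_comm _ (1 - c), mul_left_comm _ c, ← Finset.mul_sum,
    ← Finset.sum_mul, sq]
  ring

end Bordered

theorem dotProduct_borderedGram_mulVec_pos_iff {𝕜 ι : Type*} [Field 𝕜] [LinearOrder 𝕜]
    [IsStrictOrderedRing 𝕜] [Fintype ι] [DecidableEq ι] [Nontrivial ι] (c d e : 𝕜) :
    (∀ x : Option ι → 𝕜, x ≠ 0 → 0 < x ⬝ᵥ borderedGram c d e *ᵥ x) ↔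
      0 < 1 - c ∧ 0 < 1 + (Fintype.card ι - 1) * c ∧
        0 < (1 + (Fintype.card ι - 1) * c) * e - Fintype.card ι * d ^ 2 := by
  set n : 𝕜 := (Fintype.card ι : 𝕜) with hn_def
  have hn : 0 < n := by simp [n, Fintype.card_pos]
  have key (x : Option ι → 𝕜) : n * (x ⬝ᵥ borderedGram c d e *ᵥ x)
      = (1 - c) * (n * ∑ i, x (some i) ^ 2 - (∑ i, x (some i)) ^ 2)
        + ((1 + (n - 1) * c) * (∑ i, x (some i)) ^ 2
          + 2 * (n * d) * (∑ i, x (some i)) * x none + n * e * x none ^ 2) := by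
    rw [dotProduct_borderedGram_mulVec]; ring
  have hP : (∀ u v : 𝕜, u ≠ 0 ∨ v ≠ 0 →
        0 < (1 + (n - 1) * c) * u ^ 2 + 2 * (n * d) * u * v + n * e * v ^ 2) ↔
      0 < 1 + (n - 1) * c ∧ 0 < (1 + (n - 1) * c) * e - n * d ^ 2 := by
    have hdisc : (1 + (n - 1) * c) * (n * e) - (n * d) ^ 2
        = n * ((1 + (n - 1) * c) * e - n * d ^ 2) := by ring
    rw [binary_quadratic_pos_iff, hdisc, mul_pos_iff_of_pos_left hn]
  rw [← hP]
  constructor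
  · intro h
    refine ⟨?_, fun u v huv => ?_⟩
    · obtain ⟨i, j, hij⟩ := exists_pair_ne ι
      have hx : Pi.single (some i) 1 - Pi.single (some j) 1 ≠ (0 : Option ι → 𝕜) :=
        fun h0 => by simpa [hij] using congrFun h0 (some i)
      have := h _ hx
      simp [mulVec_sub, sub_dotProduct, dotProduct_sub, hij, hij.symm] at this
      linarith
    · set x : Option ι → 𝕜 := fun o => o.elim v fun _ => u / n
      have hx : x ≠ 0 := by
        rcases huv with hu | hv
        · obtain ⟨i⟩ := (inferInstance : Nonempty ι)
          exact fun h0 => div_ne_zero hu hn.ne' (congrFun h0 (some i))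
        · exact fun h0 => hv (congrFun h0 none)
      have hS : ∑ i, x (some i) = u := by
        simp [x, Finset.card_univ, ← hn_def]; field_simp
      have hT : n * ∑ i, x (some i) ^ 2 = u ^ 2 := by
        simp [x, Finset.card_univ, ← hn_def]; field_simp
      have := mul_pos hn (h x hx)
      rwa [key, hS, hT, sub_self, mul_zero, zero_add] at this
  · rintro ⟨hc, hPpos⟩ x hx
    refine pos_of_mul_pos_right ?_ hn.le
    have hCS : 0 ≤ n * ∑ i, x (some i) ^ 2 - (∑ i, x (some i)) ^ 2 := by
      simpa [n] using sq_sum_le_card_mul_sum_sq (s := Finset.univ) (f := fun i => x (some i))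
    rw [key]
    by_cases hSt : ∑ i, x (some i) = 0 ∧ x none = 0
    · obtain ⟨hS, ht⟩ := hSt
      obtain ⟨_ | i, hi⟩ := Function.ne_iff.mp hx
      · exact absurd ht hi
      have hT : 0 < ∑ i, x (some i) ^ 2 :=
        Finset.sum_pos' (fun _ _ => sq_nonneg _) ⟨i, Finset.mem_univ _, sq_pos_of_ne_zero hi⟩
      simpa [hS, ht] using mul_pos hc (mul_pos hn hT)
    · exact add_pos_of_nonneg_of_pos (mul_nonneg hc.le hCS) (hPpos _ _ (by tauto))

theorem mul5_e5_e5 {F : Type*} [Field F] (α : F) (a b : I5) :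
    mul5 F α (e5 F a) (e5 F b) = T5 F α a b := by
  change ∑ i, ∑ j, (e5 F a i * e5 F b j) • T5 F α i j = _
  simp only [e5, Pi.single_apply, ite_mul, one_mul, zero_mul, ite_smul, zero_smul, one_smul,
    Finset.sum_ite_irrel, Finset.sum_const_zero, Fintype.sum_ite_eq']

section FiveA

variable {α : ℝ} {B : (I5 → ℝ) →ₗ[ℝ] (I5 → ℝ) →ₗ[ℝ] ℝ}

theorem fiveA_form_s_s (hfrob : ∀ x y z : I5 → ℝ, B (mul5 ℝ α x y) z = B x (mul5 ℝ α y z))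
    (hdiag : ∀ i : ZMod 5, B (e5 ℝ (some i)) (e5 ℝ (some i)) = 1)
    (hoff : ∀ i j : ZMod 5, i ≠ j →
      B (e5 ℝ (some i)) (e5 ℝ (some j)) = 3 * (5 * α - 1) / 32)
    (hs : ∀ i : ZMod 5, B (e5 ℝ (some i)) (e5 ℝ none) =
      (3 * (5 * α - 1) / 32) * (1 - (5 * α - 1) / 8) - (5 * α - 1) / 8) :
    B (e5 ℝ none) (e5 ℝ none) = (825 * α ^ 3 + 185 * α ^ 2 - 45 * α - 5) / 4096 := by
  have h01 : mul5 ℝ α (e5 ℝ (some 0)) (e5 ℝ (some 1)) =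
      ((5 * α - 1) / 8) • (e5 ℝ (some 0) + e5 ℝ (some 1)) + e5 ℝ none := by
    rw [mul5_e5_e5, T5, if_neg (by decide), if_pos (Or.inl (by decide))]
  have h1s : mul5 ℝ α (e5 ℝ (some 1)) (e5 ℝ none) =
      ((1 - 5 * α) * (1 + 3 * α) / 64) • e5 ℝ (some 1)
        - ((1 + 3 * α) * (1 - 5 * α) / 128) • (e5 ℝ (some 0) + e5 ℝ (some 2))
        + ((1 + 3 * α) / 8) • e5 ℝ none := by
    rw [mul5_e5_e5, T5, show (1 : ZMod 5) - 1 = 0 by decide, show (1 : ZMod 5) + 1 = 2 by decide]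
  have h := hfrob (e5 ℝ (some 0)) (e5 ℝ (some 1)) (e5 ℝ none)
  simp only [h01, h1s, map_add, map_smul, map_sub, LinearMap.add_apply, LinearMap.smul_apply,
    smul_eq_mul, hdiag, hs, hoff 0 1 (by decide), hoff 0 2 (by decide)] at h
  linear_combination h

theorem fiveA_form_eq_borderedGram (hsymm : ∀ x y : I5 → ℝ, B x y = B y x)
    (hfrob : ∀ x y z : I5 → ℝ, B (mul5 ℝ α x y) z = B x (mul5 ℝ α y z))
    (hdiag : ∀ i : ZMod 5, B (e5 ℝ (some i)) (e5 ℝ (some i)) = 1)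
    (hoff : ∀ i j : ZMod 5, i ≠ j →
      B (e5 ℝ (some i)) (e5 ℝ (some j)) = 3 * (5 * α - 1) / 32)
    (hs : ∀ i : ZMod 5, B (e5 ℝ (some i)) (e5 ℝ none) =
      (3 * (5 * α - 1) / 32) * (1 - (5 * α - 1) / 8) - (5 * α - 1) / 8) (i j : I5) :
    B (e5 ℝ i) (e5 ℝ j) = borderedGram (3 * (5 * α - 1) / 32)
      ((3 * (5 * α - 1) / 32) * (1 - (5 * α - 1) / 8) - (5 * α - 1) / 8)
      ((825 * α ^ 3 + 185 * α ^ 2 - 45 * α - 5) / 4096) i j := by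
  rcases i with _ | i <;> rcases j with _ | j
  · exact fiveA_form_s_s hfrob hdiag hoff hs
  · exact (hsymm _ _).trans (hs j)
  · exact hs i
  · by_cases hij : i = j
    · subst hij; simpa using hdiag i
    · simpa [hij] using hoff i j hij

end FiveA

theorem fiveA_posDef_conditions_iff (α : ℝ) :
    (0 < 1 - 3 * (5 * α - 1) / 32 ∧ 0 < 1 + 4 * (3 * (5 * α - 1) / 32) ∧
      0 < (1 + 4 * (3 * (5 * α - 1) / 32)) * ((825 * α ^ 3 + 185 * α ^ 2 - 45 * α - 5) / 4096)
        - 5 * (3 * (5 * α - 1) / 32 * (1 - (5 * α - 1) / 8) - (5 * α - 1) / 8) ^ 2) ↔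
      1 / 5 < α ∧ α < 7 / 3 := by
  have hdisc : (1 + 4 * (3 * (5 * α - 1) / 32)) * ((825 * α ^ 3 + 185 * α ^ 2 - 45 * α - 5) / 4096)
        - 5 * (3 * (5 * α - 1) / 32 * (1 - (5 * α - 1) / 8) - (5 * α - 1) / 8) ^ 2
      = 25 / 65536 * ((7 - 3 * α) * (3 * α + 1) ^ 2 * (5 * α - 1)) := by ring
  rw [hdisc]
  constructor
  · rintro ⟨h1, -, h3⟩
    have h3' := pos_of_mul_pos_right h3 (by norm_num)
    have h5 := pos_of_mul_pos_right h3' (mul_nonneg (by linarith) (sq_nonneg _))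
    constructor <;> linarith
  · rintro ⟨h1, h2⟩
    have h7 : 0 < 7 - 3 * α := by linarith
    have h5 : 0 < 5 * α - 1 := by linarith
    have h3 : 0 < 3 * α + 1 := by linarith
    exact ⟨by linarith, by linarith, by positivity⟩

theorem fiveA_gram_general (α : ℝ)
    (B : (I5 → ℝ) →ₗ[ℝ] (I5 → ℝ) →ₗ[ℝ] ℝ)
    (hsymm : ∀ x y : I5 → ℝ, B x y = B y x)
    (hfrob : ∀ x y z : I5 → ℝ, B (mul5 ℝ α x y) z = B x (mul5 ℝ α y z))
    (hdiag : ∀ i : ZMod 5, B (e5 ℝ (some i)) (e5 ℝ (some i)) = 1)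
    (hoff : ∀ i j : ZMod 5, i ≠ j →
      B (e5 ℝ (some i)) (e5 ℝ (some j)) = 3 * (5 * α - 1) / 32)
    (hs : ∀ i : ZMod 5, B (e5 ℝ (some i)) (e5 ℝ none) =
      (3 * (5 * α - 1) / 32) * (1 - (5 * α - 1) / 8) - (5 * α - 1) / 8) :
    (Matrix.of fun i j : I5 => B (e5 ℝ i) (e5 ℝ j)).det =
      -(5 ^ 6 / 2 ^ 36) * (3 * α - 7) ^ 5 * (3 * α + 1) ^ 2 * (5 * α - 1) ∧
    ((∀ x : I5 → ℝ, x ≠ 0 → 0 < B x x) ↔ (1 / 5 < α ∧ α < 7 / 3)) := by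
  have hG : (Matrix.of fun i j : I5 => B (e5 ℝ i) (e5 ℝ j)) = borderedGram _ _ _ :=
    Matrix.ext (fiveA_form_eq_borderedGram hsymm hfrob hdiag hoff hs)
  have hB (x : I5 → ℝ) : B x x = x ⬝ᵥ (Matrix.of fun i j : I5 => B (e5 ℝ i) (e5 ℝ j)) *ᵥ x :=
    LinearMap.BilinForm.apply_eq_dotProduct_toMatrix_mulVec (Pi.basisFun ℝ I5) B x x
  rw [hG] at hB ⊢
  constructor
  · rw [det_borderedGram_of_card_eq_five _ _ _ (ZMod.card 5)]
    ring
  · have : Fact (1 < 5) := ⟨by norm_num⟩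
    simp_rw [hB]
    rw [dotProduct_borderedGram_mulVec_pos_iff, ZMod.card, ← fiveA_posDef_conditions_iff]
    norm_num

/-- The Frobenius form on `5A_α` with `(a_i,a_i) = 1`, `(a_i,a_j) = (3/32)(5α-1)` for
`i ≠ j` and `(a_i,s) = λ(1-β) - β` (`λ = 3(5α-1)/32`, `β = (5α-1)/8`) has Gram matrix of
determinant `-(5^6/2^36)(3α-7)^5(3α+1)^2(5α-1)`, and is positive definite exactly when
`1/5 < α < 7/3`. -/
theorem fiveA_gram (α : ℝ)
    (hα0 : α ≠ 0) (hα5 : α ≠ 1 / 5) (hα2 : α ≠ 1 / 2) (hα1 : α ≠ 1) (hα9 : α ≠ 9 / 5)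
    (B : (I5 → ℝ) →ₗ[ℝ] (I5 → ℝ) →ₗ[ℝ] ℝ)
    (hsymm : ∀ x y : I5 → ℝ, B x y = B y x)
    (hfrob : ∀ x y z : I5 → ℝ, B (mul5 ℝ α x y) z = B x (mul5 ℝ α y z))
    (hdiag : ∀ i : ZMod 5, B (e5 ℝ (some i)) (e5 ℝ (some i)) = 1)
    (hoff : ∀ i j : ZMod 5, i ≠ j →
      B (e5 ℝ (some i)) (e5 ℝ (some j)) = 3 * (5 * α - 1) / 32)
    (hs : ∀ i : ZMod 5, B (e5 ℝ (some i)) (e5 ℝ none) =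
      (3 * (5 * α - 1) / 32) * (1 - (5 * α - 1) / 8) - (5 * α - 1) / 8) :
    (Matrix.of fun i j : I5 => B (e5 ℝ i) (e5 ℝ j)).det =
      -(5 ^ 6 / 2 ^ 36) * (3 * α - 7) ^ 5 * (3 * α + 1) ^ 2 * (5 * α - 1) ∧
    ((∀ x : I5 → ℝ, x ≠ 0 → 0 < B x x) ↔ (1 / 5 < α ∧ α < 7 / 3)) :=
  fiveA_gram_general α B hsymm hfrob hdiag hoff hs
end
end
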